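/- The proposition ¬¬((¬¬∀x ¬¬(P(x) ∧ Q)) ⇒ (¬¬∀x P(x))) has no constructive proof, where P is a unary predicate and Q a propositional atom. -/

import Mathlib

/-- Terms: de Bruijn variables and a binary function symbol (union). -/
inductive Tm : Type where
  | var : Nat → Tm
  | cup : Tm → Tm → Tm
deriving DecidableEq

def Tm.rename (f : Nat → Nat) : Tm → Tm
  | .var n => .var (f n)
  | .cup s t => .cup (s.rename f) (t.rename f)

def Tm.subst (σ : Nat → Tm) : Tm → Tm
  | .var n => σ n
  | .cup s t => .cup (s.subst σ) (t.subst σ)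

/-- First-order formulas over Nat-indexed predicate symbols, de Bruijn binders. -/
inductive Fm : Type where
  | atom : Nat → List Tm → Fm
  | top : Fm
  | bot : Fm
  | neg : Fm → Fm
  | and : Fm → Fm → Fm
  | or : Fm → Fm → Fm
  | imp : Fm → Fm → Fm
  | all : Fm → Fm
  | ex : Fm → Fm
deriving DecidableEq

def liftR (f : Nat → Nat) : Nat → Nat
  | 0 => 0
  | n + 1 => f n + 1

def liftS (σ : Nat → Tm) : Nat → Tm
  | 0 => .var 0
  | n + 1 => (σ n).rename Nat.succ

def Fm.rename (f : Nat → Nat) : Fm → Fm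
  | .atom p l => .atom p (l.map (Tm.rename f))
  | .top => .top
  | .bot => .bot
  | .neg A => .neg (A.rename f)
  | .and A B => .and (A.rename f) (B.rename f)
  | .or A B => .or (A.rename f) (B.rename f)
  | .imp A B => .imp (A.rename f) (B.rename f)
  | .all A => .all (A.rename (liftR f))
  | .ex A => .ex (A.rename (liftR f))

def Fm.subst (σ : Nat → Tm) : Fm → Fm
  | .atom p l => .atom p (l.map (Tm.subst σ))
  | .top => .top
  | .bot => .bot
  | .neg A => .neg (A.subst σ)
  | .and A B => .and (A.subst σ) (B.subst σ)
  | .or A B => .or (A.subst σ) (B.subst σ)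
  | .imp A B => .imp (A.subst σ) (B.subst σ)
  | .all A => .all (A.subst (liftS σ))
  | .ex A => .ex (A.subst (liftS σ))

/-- Shift all free variables up by one. -/
def Fm.shift (A : Fm) : Fm := A.rename Nat.succ

/-- Instantiate the outermost bound variable with term `t` : `(t/x)A`. -/
def Fm.inst (t : Tm) (A : Fm) : Fm :=
  A.subst (fun n => match n with | 0 => t | n + 1 => .var n)

/-- Double negation. -/
def Fm.dn (A : Fm) : Fm := .neg (.neg A)

/-- Cut-free classical multi-conclusion sequent calculus (Figure 1). -/
inductive Cl : List Fm → List Fm → Prop where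
  | ax (A : Fm) : Cl [A] [A]
  | perm {Γ Γ' Δ Δ'} : Γ.Perm Γ' → Δ.Perm Δ' → Cl Γ Δ → Cl Γ' Δ'
  | contrL {Γ Δ A} : Cl (A :: A :: Γ) Δ → Cl (A :: Γ) Δ
  | contrR {Γ Δ A} : Cl Γ (A :: A :: Δ) → Cl Γ (A :: Δ)
  | weakL {Γ Δ A} : Cl Γ Δ → Cl (A :: Γ) Δ
  | weakR {Γ Δ A} : Cl Γ Δ → Cl Γ (A :: Δ)
  | topR {Γ Δ} : Cl Γ (.top :: Δ)
  | botL {Γ Δ} : Cl (.bot :: Γ) Δ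
  | negL {Γ Δ A} : Cl Γ (A :: Δ) → Cl (.neg A :: Γ) Δ
  | negR {Γ Δ A} : Cl (A :: Γ) Δ → Cl Γ (.neg A :: Δ)
  | andL {Γ Δ A B} : Cl (A :: B :: Γ) Δ → Cl (.and A B :: Γ) Δ
  | andR {Γ Δ A B} : Cl Γ (A :: Δ) → Cl Γ (B :: Δ) → Cl Γ (.and A B :: Δ)
  | orL {Γ Δ A B} : Cl (A :: Γ) Δ → Cl (B :: Γ) Δ → Cl (.or A B :: Γ) Δ
  | orR1 {Γ Δ A B} : Cl Γ (A :: Δ) → Cl Γ (.or A B :: Δ)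
  | orR2 {Γ Δ A B} : Cl Γ (B :: Δ) → Cl Γ (.or A B :: Δ)
  | impL {Γ Δ A B} : Cl Γ (A :: Δ) → Cl (B :: Γ) Δ → Cl (.imp A B :: Γ) Δ
  | impR {Γ Δ A B} : Cl (A :: Γ) (B :: Δ) → Cl Γ (.imp A B :: Δ)
  | allL {Γ Δ A} (t : Tm) : Cl (A.inst t :: Γ) Δ → Cl (.all A :: Γ) Δ
  | allR {Γ Δ A} : Cl (Γ.map Fm.shift) (A :: Δ.map Fm.shift) → Cl Γ (.all A :: Δ)
  | exL {Γ Δ A} : Cl (A :: Γ.map Fm.shift) (Δ.map Fm.shift) → Cl (.ex A :: Γ) Δ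
  | exR {Γ Δ A} (t : Tm) : Cl Γ (A.inst t :: Δ) → Cl Γ (.ex A :: Δ)

/-- Constructive (intuitionistic) single-conclusion sequent calculus:
the restriction of the classical calculus to sequents with at most one
conclusion, with the adapted ⇒-left rule. -/
inductive Intu : List Fm → Option Fm → Prop where
  | ax (A : Fm) : Intu [A] (some A)
  | perm {Γ Γ' Δ} : Γ.Perm Γ' → Intu Γ Δ → Intu Γ' Δ
  | contrL {Γ Δ A} : Intu (A :: A :: Γ) Δ → Intu (A :: Γ) Δ
  | weakL {Γ Δ A} : Intu Γ Δ → Intu (A :: Γ) Δ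
  | weakR {Γ A} : Intu Γ none → Intu Γ (some A)
  | topR {Γ} : Intu Γ (some .top)
  | botL {Γ Δ} : Intu (.bot :: Γ) Δ
  | negL {Γ A} : Intu Γ (some A) → Intu (.neg A :: Γ) none
  | negR {Γ A} : Intu (A :: Γ) none → Intu Γ (some (.neg A))
  | andL {Γ Δ A B} : Intu (A :: B :: Γ) Δ → Intu (.and A B :: Γ) Δ
  | andR {Γ A B} : Intu Γ (some A) → Intu Γ (some B) → Intu Γ (some (.and A B))
  | orL {Γ Δ A B} : Intu (A :: Γ) Δ → Intu (B :: Γ) Δ → Intu (.or A B :: Γ) Δ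
  | orR1 {Γ A B} : Intu Γ (some A) → Intu Γ (some (.or A B))
  | orR2 {Γ A B} : Intu Γ (some B) → Intu Γ (some (.or A B))
  | impL {Γ Δ A B} : Intu Γ (some A) → Intu (B :: Γ) Δ → Intu (.imp A B :: Γ) Δ
  | impR {Γ A B} : Intu (A :: Γ) (some B) → Intu Γ (some (.imp A B))
  | allL {Γ Δ A} (t : Tm) : Intu (A.inst t :: Γ) Δ → Intu (.all A :: Γ) Δ
  | allR {Γ A} : Intu (Γ.map Fm.shift) (some A) → Intu Γ (some (.all A))
  | exL {Γ Δ A} : Intu (A :: Γ.map Fm.shift) (Δ.map Fm.shift) → Intu (.ex A :: Γ) Δ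
  | exR {Γ A} (t : Tm) : Intu Γ (some (A.inst t)) → Intu Γ (some (.ex A))

/-- Dowek's translation ‖·‖: double negations both before and after each
connective and quantifier, atoms unchanged. -/
def Fm.bar : Fm → Fm
  | .atom p l => .atom p l
  | .top => Fm.dn .top
  | .bot => Fm.dn .bot
  | .neg A => Fm.dn (Fm.dn (.neg A.bar))
  | .and A B => Fm.dn (.and (Fm.dn A.bar) (Fm.dn B.bar))
  | .or A B => Fm.dn (.or (Fm.dn A.bar) (Fm.dn B.bar))
  | .imp A B => Fm.dn (.imp (Fm.dn A.bar) (Fm.dn B.bar))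
  | .all A => Fm.dn (.all (Fm.dn A.bar))
  | .ex A => Fm.dn (.ex (Fm.dn A.bar))

/-- The light translation |·|: like ‖·‖ but the outermost double negation
is removed. -/
def Fm.light : Fm → Fm
  | .atom p l => .atom p l
  | .top => .top
  | .bot => .bot
  | .neg A => .neg (Fm.dn A.bar)
  | .and A B => .and (Fm.dn A.bar) (Fm.dn B.bar)
  | .or A B => .or (Fm.dn A.bar) (Fm.dn B.bar)
  | .imp A B => .imp (Fm.dn A.bar) (Fm.dn B.bar)
  | .all A => .all (Fm.dn A.bar)
  | .ex A => .ex (Fm.dn A.bar)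

/-- A formula is atomic if it is of the form `atom p l`. -/
def Fm.isAtom : Fm → Prop
  | .atom _ _ => True
  | _ => False


/-! The formula fails in the Kripke model with worlds `ℕ` and domain `ℕ` in which `P d` holds at
world `w` iff `d < w`, and `Q` holds everywhere. Every element eventually satisfies `P ∧ Q`, so
`∀x ¬¬(P x ∧ Q)` is forced at every world, while `∀x P x` is forced nowhere (it fails at `w` for
`x = w`). Hence the implication is refuted at every world, its negation is forced at the root,
and the double negation is not forced there; soundness of intuitionistic sequent calculus for
Kripke semantics finishes the argument. -/

structure KripkeModel (W D : Type*) [Preorder W] where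
  cup : D → D → D
  rel : Nat → W → List D → Prop
  rel_mono {p : Nat} {w v : W} {l : List D} : w ≤ v → rel p w l → rel p v l

namespace KripkeModel

variable {W D : Type*} [Preorder W] (M : KripkeModel W D)

def eval (ρ : Nat → D) : Tm → D
  | .var n => ρ n
  | .cup s t => M.cup (eval ρ s) (eval ρ t)

def consEnv (d : D) (ρ : Nat → D) : Nat → D
  | 0 => d
  | n + 1 => ρ n

def Forces (w : W) (ρ : Nat → D) : Fm → Prop
  | .atom p l => M.rel p w (l.map (M.eval ρ))
  | .top => True
  | .bot => False
  | .neg A => ∀ v, w ≤ v → ¬ Forces v ρ A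
  | .and A B => Forces w ρ A ∧ Forces w ρ B
  | .or A B => Forces w ρ A ∨ Forces w ρ B
  | .imp A B => ∀ v, w ≤ v → Forces v ρ A → Forces v ρ B
  | .all A => ∀ d, Forces w (consEnv d ρ) A
  | .ex A => ∃ d, Forces w (consEnv d ρ) A

def ForcesConcl (w : W) (ρ : Nat → D) : Option Fm → Prop
  | none => False
  | some A => M.Forces w ρ A

theorem eval_rename (ρ : Nat → D) (f : Nat → Nat) (t : Tm) :
    M.eval ρ (t.rename f) = M.eval (ρ ∘ f) t := by
  induction t with
  | var n => rfl
  | cup s t ihs iht => simp only [Tm.rename, eval, ihs, iht]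

theorem eval_subst (ρ : Nat → D) (σ : Nat → Tm) (t : Tm) :
    M.eval ρ (t.subst σ) = M.eval (M.eval ρ ∘ σ) t := by
  induction t with
  | var n => rfl
  | cup s t ihs iht => simp only [Tm.subst, eval, ihs, iht]

theorem consEnv_comp_liftR (d : D) (ρ : Nat → D) (f : Nat → Nat) :
    consEnv d ρ ∘ liftR f = consEnv d (ρ ∘ f) := by
  funext n; cases n <;> rfl

theorem eval_consEnv_comp_liftS (d : D) (ρ : Nat → D) (σ : Nat → Tm) :
    M.eval (consEnv d ρ) ∘ liftS σ = consEnv d (M.eval ρ ∘ σ) := by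
  funext n
  cases n with
  | zero => rfl
  | succ n => exact M.eval_rename _ Nat.succ (σ n)

theorem forces_rename (f : Nat → Nat) (A : Fm) (w : W) (ρ : Nat → D) :
    M.Forces w ρ (A.rename f) ↔ M.Forces w (ρ ∘ f) A := by
  induction A generalizing f w ρ with
  | atom p l => simp only [Fm.rename, Forces, List.map_map, Function.comp_def, eval_rename]
  | top | bot => rfl
  | neg A ih => simp only [Fm.rename, Forces, ih]
  | and A B ihA ihB | or A B ihA ihB | imp A B ihA ihB => simp only [Fm.rename, Forces, ihA, ihB]
  | all A ih | ex A ih => simp only [Fm.rename, Forces, ih, consEnv_comp_liftR]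

theorem forces_subst (σ : Nat → Tm) (A : Fm) (w : W) (ρ : Nat → D) :
    M.Forces w ρ (A.subst σ) ↔ M.Forces w (M.eval ρ ∘ σ) A := by
  induction A generalizing σ w ρ with
  | atom p l => simp only [Fm.subst, Forces, List.map_map, Function.comp_def, eval_subst]
  | top | bot => rfl
  | neg A ih => simp only [Fm.subst, Forces, ih]
  | and A B ihA ihB | or A B ihA ihB | imp A B ihA ihB => simp only [Fm.subst, Forces, ihA, ihB]
  | all A ih | ex A ih => simp only [Fm.subst, Forces, ih, eval_consEnv_comp_liftS]

theorem forces_inst (t : Tm) (A : Fm) (w : W) (ρ : Nat → D) :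
    M.Forces w ρ (A.inst t) ↔ M.Forces w (consEnv (M.eval ρ t) ρ) A := by
  rw [Fm.inst, forces_subst]
  congr! 1
  funext n; cases n <;> rfl

theorem forces_shift (A : Fm) (w : W) (d : D) (ρ : Nat → D) :
    M.Forces w (consEnv d ρ) A.shift ↔ M.Forces w ρ A :=
  M.forces_rename Nat.succ A w (consEnv d ρ)

theorem forces_mono {w v : W} (hwv : w ≤ v) (A : Fm) (ρ : Nat → D) :
    M.Forces w ρ A → M.Forces v ρ A := by
  induction A generalizing w v ρ with
  | atom p l => exact M.rel_mono hwv
  | top | bot => exact id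
  | neg A _ | imp A B _ _ => exact fun h u hu => h u (hwv.trans hu)
  | and A B ihA ihB => exact fun h => ⟨ihA hwv ρ h.1, ihB hwv ρ h.2⟩
  | or A B ihA ihB => exact Or.imp (ihA hwv ρ) (ihB hwv ρ)
  | all A ih => exact fun h d => ih hwv _ (h d)
  | ex A ih => exact fun ⟨d, hd⟩ => ⟨d, ih hwv _ hd⟩

theorem forces_dn_of_forall {A : Fm} {ρ : Nat → D} (hA : ∀ v, M.Forces v ρ A) (w : W) :
    M.Forces w ρ (Fm.dn A) :=
  fun v _ hnA => hnA v le_rfl (hA v)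

theorem not_forces_dn_of_forall {A : Fm} {ρ : Nat → D} (hA : ∀ v, ¬ M.Forces v ρ A) (w : W) :
    ¬ M.Forces w ρ (Fm.dn A) :=
  fun h => h w le_rfl fun v _ => hA v

theorem not_forces_dn_imp {A B : Fm} {ρ : Nat → D} (hA : ∀ v, M.Forces v ρ A)
    (hB : ∀ v, ¬ M.Forces v ρ B) (w : W) : ¬ M.Forces w ρ (Fm.dn (.imp A B)) :=
  M.not_forces_dn_of_forall (A := .imp A B) (fun v himp => hB v (himp v le_rfl (hA v))) w

end KripkeModel

open KripkeModel in
theorem Intu.sound {Γ : List Fm} {Δ : Option Fm} (h : Intu Γ Δ) {W D : Type*} [Preorder W]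
    (M : KripkeModel W D) (w : W) (ρ : Nat → D) (hΓ : ∀ A ∈ Γ, M.Forces w ρ A) :
    M.ForcesConcl w ρ Δ := by
  induction h generalizing w ρ with
  | ax A => exact hΓ A List.mem_cons_self
  | perm hp _ ih => exact ih w ρ fun A hA => hΓ A (hp.mem_iff.mp hA)
  | contrL _ ih =>
    simp only [List.forall_mem_cons] at hΓ ih ⊢
    exact ih w ρ ⟨hΓ.1, hΓ⟩
  | weakL _ ih => exact ih w ρ fun B hB => hΓ B (List.mem_cons_of_mem _ hB)
  | weakR _ ih => exact (ih w ρ hΓ).elim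
  | topR => trivial
  | botL => exact (hΓ _ List.mem_cons_self).elim
  | negL _ ih =>
    simp only [List.forall_mem_cons] at hΓ
    exact hΓ.1 w le_rfl (ih w ρ hΓ.2)
  | negR _ ih =>
    intro v hv hA
    exact ih v ρ (List.forall_mem_cons.mpr ⟨hA, fun B hB => M.forces_mono hv B ρ (hΓ B hB)⟩)
  | andL _ ih =>
    simp only [List.forall_mem_cons] at hΓ ih
    exact ih w ρ ⟨hΓ.1.1, hΓ.1.2, hΓ.2⟩
  | andR _ _ ih₁ ih₂ => exact ⟨ih₁ w ρ hΓ, ih₂ w ρ hΓ⟩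
  | orL _ _ ih₁ ih₂ =>
    simp only [List.forall_mem_cons] at hΓ ih₁ ih₂
    exact hΓ.1.elim (fun hA => ih₁ w ρ ⟨hA, hΓ.2⟩) (fun hB => ih₂ w ρ ⟨hB, hΓ.2⟩)
  | orR1 _ ih => exact Or.inl (ih w ρ hΓ)
  | orR2 _ ih => exact Or.inr (ih w ρ hΓ)
  | impL _ _ ih₁ ih₂ =>
    simp only [List.forall_mem_cons] at hΓ ih₂
    exact ih₂ w ρ ⟨hΓ.1 w le_rfl (ih₁ w ρ hΓ.2), hΓ.2⟩
  | impR _ ih =>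
    intro v hv hA
    exact ih v ρ (List.forall_mem_cons.mpr ⟨hA, fun B hB => M.forces_mono hv B ρ (hΓ B hB)⟩)
  | allL t _ ih =>
    simp only [List.forall_mem_cons] at hΓ ih
    exact ih w ρ ⟨(M.forces_inst t _ w ρ).mpr (hΓ.1 _), hΓ.2⟩
  | allR _ ih =>
    intro d
    exact ih w (consEnv d ρ)
      (List.forall_mem_map.mpr fun B hB => (M.forces_shift B w d ρ).mpr (hΓ B hB))
  | @exL _ Δ _ _ ih =>
    simp only [List.forall_mem_cons] at hΓ ih
    obtain ⟨⟨d, hd⟩, hΓ⟩ := hΓ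
    have hΔ := ih w (consEnv d ρ)
      ⟨hd, List.forall_mem_map.mpr fun B hB => (M.forces_shift B w d ρ).mpr (hΓ B hB)⟩
    cases Δ with
    | none => exact hΔ
    | some B => exact (M.forces_shift B w d ρ).mp hΔ
  | exR t _ ih => exact ⟨M.eval ρ t, (M.forces_inst t _ w ρ).mp (ih w ρ hΓ)⟩

def growingModel : KripkeModel Nat Nat where
  cup := max
  rel
    | 0, w, l => l.headD 0 < w
    | _ + 1, _, _ => True
  rel_mono {p _ _ _} hwv := by
    cases p with
    | zero => exact fun h => h.trans_le hwv
    | succ p => exact id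

theorem growingModel_not_forces_all_P (w : Nat) (ρ : Nat → Nat) :
    ¬ growingModel.Forces w ρ (.all (.atom 0 [.var 0])) :=
  fun h => lt_irrefl w (h w)

theorem growingModel_forces_all_dn_P_and_Q (w : Nat) (ρ : Nat → Nat) :
    growingModel.Forces w ρ (.all (Fm.dn (.and (.atom 0 [.var 0]) (.atom 1 [])))) := by
  intro d v _ hv
  exact hv (max v (d + 1)) (le_max_left _ _)
    ⟨(Nat.lt_succ_self d).trans_le (le_max_right _ _), trivial⟩

theorem stmt10 :
    ¬ Intu [] (some (Fm.dn (.imp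
        (Fm.dn (.all (Fm.dn (.and (.atom 0 [.var 0]) (.atom 1 [])))))
        (Fm.dn (.all (.atom 0 [.var 0])))))) := fun h =>
  growingModel.not_forces_dn_imp
    (growingModel.forces_dn_of_forall (growingModel_forces_all_dn_P_and_Q · _))
    (growingModel.not_forces_dn_of_forall (growingModel_not_forces_all_P · _)) 0
    (h.sound growingModel 0 (fun _ => 0) (by simp))
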